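/- Every LM-system has no non-overlay superpositions: for rules l1 → r1, l2 → r2 of an LM-system R (renamed apart) and any non-root non-variable position p of l1, the subterm l1|_p is not unifiable with l2. Equivalently NOSUP(R) = ∅. -/

import Mathlib

/-! Basic first-order terms, positions, substitutions and rewriting. -/

inductive Term (F : Type) : Type
  | var : Nat → Term F
  | app : F → List (Term F) → Term F

namespace Term

def subst {F : Type} (σ : Nat → Term F) : Term F → Term F
  | var n => σ n
  | app f ts => app f (ts.attach.map fun ⟨t, _⟩ => t.subst σ)

def root {F : Type} : Term F → Option F
  | var _ => none
  | app f _ => some f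

def label {F : Type} : Term F → F ⊕ Nat
  | var n => Sum.inr n
  | app f _ => Sum.inl f

def IsVar {F : Type} : Term F → Prop
  | var _ => True
  | app _ _ => False

def varsL {F : Type} : Term F → List Nat
  | var n => [n]
  | app _ ts => (ts.attach.map fun ⟨t, _⟩ => t.varsL).flatten

end Term

abbrev Rule (F : Type) := Term F × Term F
abbrev TRS (F : Type) := Set (Rule F)

/-- `SubtermAt t p u` : the subterm of `t` at position `p` is `u`. -/
inductive SubtermAt {F : Type} : Term F → List Nat → Term F → Prop
  | here (t : Term F) : SubtermAt t [] t
  | there {f : F} {ts : List (Term F)} {i : Nat} {u : Term F} {p : List Nat} {v : Term F} :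
      ts[i]? = some u → SubtermAt u p v → SubtermAt (Term.app f ts) (i :: p) v

/-- `ReplaceAt t p v t'` : replacing the subterm of `t` at position `p` by `v` yields `t'`. -/
inductive ReplaceAt {F : Type} : Term F → List Nat → Term F → Term F → Prop
  | here (t u : Term F) : ReplaceAt t [] u u
  | there {f : F} {ts : List (Term F)} {i : Nat} {u : Term F} {p : List Nat} {v w : Term F} :
      ts[i]? = some u → ReplaceAt u p v w →
      ReplaceAt (Term.app f ts) (i :: p) v (Term.app f (ts.set i w))

variable {F : Type}

/-- One rewrite step using the given rule (at some position, with some substitution). -/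
def RuleStep (ρ : Rule F) (s t : Term F) : Prop :=
  ∃ (σ : Nat → Term F) (p : List Nat),
    SubtermAt s p (ρ.1.subst σ) ∧ ReplaceAt s p (ρ.2.subst σ) t

def OneStep (R : TRS F) (s t : Term F) : Prop := ∃ ρ ∈ R, RuleStep ρ s t

/-- A rewrite step at the root position. -/
def RootStep (R : TRS F) (s t : Term F) : Prop :=
  ∃ ρ ∈ R, ∃ σ : Nat → Term F, s = ρ.1.subst σ ∧ t = ρ.2.subst σ

def StarRW (R : TRS F) : Term F → Term F → Prop := Relation.ReflTransGen (OneStep R)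
def Plus (R : TRS F) : Term F → Term F → Prop := Relation.TransGen (OneStep R)
/-- Convertibility (the congruence / equational theory generated by `R`). -/
def Conv (R : TRS F) : Term F → Term F → Prop := Relation.EqvGen (OneStep R)
def Joinable (R : TRS F) (s t : Term F) : Prop := ∃ u, StarRW R s u ∧ StarRW R t u
def NormalForm (R : TRS F) (t : Term F) : Prop := ∀ u, ¬ OneStep R t u
/-- `t` is the `R`-normal form of `s`. -/
def NFof (R : TRS F) (s t : Term F) : Prop := StarRW R s t ∧ NormalForm R t
def Terminating (R : TRS F) : Prop := WellFounded (fun a b : Term F => OneStep R b a)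
def Confluent (R : TRS F) : Prop := ∀ s t u, StarRW R s t → StarRW R s u → Joinable R t u
def Convergent (R : TRS F) : Prop := Confluent R ∧ Terminating R

/-- every proper subterm is irreducible -/
def EpsIrreducible (R : TRS F) (t : Term F) : Prop :=
  ∀ p u, SubtermAt t p u → p ≠ [] → NormalForm R u

def InnermostRedex (R : TRS F) (t : Term F) : Prop :=
  EpsIrreducible R t ∧ ¬ NormalForm R t

/-- Forward-closed, via the one-step-to-normal-form characterization. -/
def FCclosed (R : TRS F) : Prop :=
  ∀ t, InnermostRedex R t → ∀ u, NFof R t u → OneStep R t u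

def Unifies (σ : Nat → Term F) (s t : Term F) : Prop := s.subst σ = t.subst σ

def IsMGU (σ : Nat → Term F) (s t : Term F) : Prop :=
  Unifies σ s t ∧ ∀ τ, Unifies τ s t → ∃ δ, ∀ x, τ x = (σ x).subst δ

def IsRenaming (ρ : Nat → Term F) : Prop :=
  ∃ f : Nat → Nat, Function.Injective f ∧ ∀ n, ρ n = Term.var (f n)

/-- Redundancy criterion for an oriented equation `e` whose right-hand side is
reachable from its left-hand side: some proper subterm of the lhs is reducible. -/
def Redundant (R : TRS F) (e : Rule F) : Prop :=
  ∃ p u, p ≠ ([] : List Nat) ∧ SubtermAt e.1 p u ∧ ¬ NormalForm R u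

/-- `R₁ ↝ R₂`: forward overlaps of rules of `R₂` (renamed apart) into
right-hand sides of rules of `R₁`, at non-variable positions, via an mgu. -/
def FStep (R₁ R₂ : TRS F) : TRS F :=
  { e | ∃ (l₁ r₁ l₂ r₂ : Term F) (ρ : Nat → Term F) (p : List Nat) (u : Term F)
          (σ : Nat → Term F) (r₁' : Term F),
      (l₁, r₁) ∈ R₁ ∧ (l₂, r₂) ∈ R₂ ∧ IsRenaming ρ ∧
      SubtermAt r₁ p u ∧ ¬ u.IsVar ∧ IsMGU σ u (l₂.subst ρ) ∧
      ReplaceAt r₁ p (r₂.subst ρ) r₁' ∧ e = (l₁.subst σ, r₁'.subst σ) }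

def FCiter (R : TRS F) : Nat → TRS F
  | 0 => R
  | k + 1 => FCiter R k ∪ { e | e ∈ FStep (FCiter R k) R ∧ ¬ Redundant (FCiter R k) e }

def FCinf (R : TRS F) : TRS F := ⋃ k, FCiter R k

/-- Forward-closed, via the forward-closure construction: `FC(R) = R`. -/
def ForwardClosedFC (R : TRS F) : Prop := FCinf R = R

/-- `RHS(R)`: `R` together with the conclusions of right-hand-side critical
pair inferences (second rule renamed apart). -/
def RHSset (R : TRS F) : TRS F :=
  R ∪ { e | ∃ (s t u₀ v₀ : Term F) (ρ σ : Nat → Term F), (s, t) ∈ R ∧ (u₀, v₀) ∈ R ∧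
        IsRenaming ρ ∧ IsMGU σ t (v₀.subst ρ) ∧
        s.subst σ ≠ (u₀.subst ρ).subst σ ∧ e = (s.subst σ, (u₀.subst ρ).subst σ) }

/-- the (unordered) pairs of root symbols of two equations coincide -/
def RootPairSimilar (e₁ e₂ : Rule F) : Prop :=
  (e₁.1.root = e₂.1.root ∧ e₁.2.root = e₂.2.root) ∨
  (e₁.1.root = e₂.2.root ∧ e₁.2.root = e₂.1.root)

def QuasiDet (E : TRS F) : Prop :=
  (∀ e ∈ E, ¬ e.1.IsVar ∧ ¬ e.2.IsVar) ∧
  (∀ e ∈ E, e.1.root ≠ e.2.root) ∧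
  (∀ e₁ ∈ E, ∀ e₂ ∈ E, e₁ ≠ e₂ → ¬ RootPairSimilar e₁ e₂)

def HasRootPairRepetition (E : TRS F) : Prop :=
  ∃ e₁ ∈ E, ∃ e₂ ∈ E, e₁ ≠ e₂ ∧ RootPairSimilar e₁ e₂

def VarPreserving (R : TRS F) : Prop :=
  ∀ e ∈ R, ∀ n, n ∈ Term.varsL e.1 ↔ n ∈ Term.varsL e.2

def RightReduced (R : TRS F) : Prop := ∀ e ∈ R, NormalForm R e.2

def AlmostLeftReduced (R : TRS F) : Prop :=
  ¬ ∃ (l₁ r₁ l₂ r₂ : Term F) (p : List Nat) (u : Term F) (σ : Nat → Term F),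
      (l₁, r₁) ∈ R ∧ (l₂, r₂) ∈ R ∧ p ≠ [] ∧ SubtermAt l₁ p u ∧ u = l₂.subst σ

def NonSubtermCollapsing (R : TRS F) : Prop :=
  ¬ ∃ (t u : Term F) (p : List Nat), p ≠ [] ∧ SubtermAt u p t ∧ Conv R t u

structure LMSystem (R : TRS F) : Prop where
  convergent : Convergent R
  almostLeftReduced : AlmostLeftReduced R
  rightReduced : RightReduced R
  nonCollapsing : NonSubtermCollapsing R
  forwardClosed : FCclosed R
  quasiDet : QuasiDet (RHSset R)

/-- the symbol (function symbol or variable) of a term at a position, if defined -/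
def labelAt {F : Type} : List Nat → Term F → Option (F ⊕ Nat)
  | [], t => some t.label
  | i :: p, Term.app _ ts => (ts[i]?).bind (labelAt p)
  | _ :: _, Term.var _ => none

/-- outermost distinguishing position -/
def ODP (s t : Term F) (p : List Nat) : Prop :=
  (labelAt p s ≠ none ∨ labelAt p t ≠ none) ∧
  labelAt p s ≠ labelAt p t ∧
  ∀ q, q <+: p → q ≠ p → labelAt q s = labelAt q t

/-!
Suppose a non-variable subterm `u` at a non-root position of a left-hand side has an instance
`u σ` that is also an instance of a left-hand side, and choose such a term `c = u σ` minimal for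
the well-founded order generated by rewriting and passing to proper subterms. By minimality,
normalising the two matching substitutions yields another such overlap reachable from `c`, hence
`c` itself; so `σ` is normalised and `c` is an innermost redex. By forward closure `c` then reaches
its normal form by a single root step, which by quasi-determinism changes the root symbol.

This is impossible: if normalising `u θ` changes its root, consider the peak `l θ → r θ` of the rule
`l → r` containing `u`. Each side is normalised below the root and then by at most one root step,
and quasi-determinism of `RHS(R)` excludes every combination: normal forms with the distinct roots
of `l` and `r`, a rule or right-hand-side critical pair repeating the root pair of `l → r` swapped,
or a root step by `l → r` itself, which would make the normal forms of the arguments of `l θ`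
instances of the arguments of `l`, and, descending to `u`, keep the root of `u θ`.
-/

/-! ### Terms, substitutions and positions -/

namespace Term

theorem var_subst (σ : Nat → Term F) (n : Nat) : (var n).subst σ = σ n := by
  rw [subst]

theorem subst_app (σ : Nat → Term F) (f : F) (ts : List (Term F)) :
    (app f ts).subst σ = app f (ts.map (subst σ)) := by
  rw [subst]; congr 1; simp

@[elab_as_elim]
theorem ind {P : Term F → Prop} (var : ∀ n, P (var n))
    (app : ∀ f ts, (∀ t ∈ ts, P t) → P (app f ts)) : ∀ t, P t
  | .var n => var n
  | .app f ts => app f ts fun t _ => ind var app t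

def size : Term F → Nat
  | var _ => 1
  | app _ ts => 1 + (ts.attach.map fun ⟨t, _⟩ => t.size).sum

theorem size_app (f : F) (ts : List (Term F)) : (app f ts).size = 1 + (ts.map size).sum := by
  rw [size]; congr 2; simp

theorem size_pos (t : Term F) : 0 < t.size := by
  cases t <;> simp only [size, size_app] <;> omega

theorem size_lt_of_mem {t : Term F} {ts : List (Term F)} (h : t ∈ ts) (f : F) :
    t.size < (app f ts).size := by
  rw [size_app]
  have := List.le_sum_of_mem (List.mem_map_of_mem (f := size) h)
  omega

theorem mem_varsL_var {x n : Nat} : x ∈ (var n : Term F).varsL ↔ x = n := by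
  simp [varsL]

theorem mem_varsL_app {x : Nat} {f : F} {ts : List (Term F)} :
    x ∈ (app f ts).varsL ↔ ∃ t ∈ ts, x ∈ t.varsL := by
  rw [varsL]; simp [List.mem_flatten]

theorem subst_congr {t : Term F} {σ σ' : Nat → Term F} (h : ∀ x ∈ t.varsL, σ x = σ' x) :
    t.subst σ = t.subst σ' := by
  induction t using ind with
  | var n => simpa [var_subst, mem_varsL_var] using h
  | app f ts ih =>
    rw [subst_app, subst_app, List.map_inj_left.mpr]
    exact fun s hs => ih s hs fun x hx => h x (mem_varsL_app.mpr ⟨s, hs, hx⟩)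

theorem subst_var (t : Term F) : t.subst var = t := by
  induction t using ind with
  | var n => rw [var_subst]
  | app f ts ih => rw [subst_app, List.map_congr_left ih, List.map_id']

theorem subst_subst (t : Term F) (σ δ : Nat → Term F) :
    (t.subst σ).subst δ = t.subst fun x => (σ x).subst δ := by
  induction t using ind with
  | var n => simp [var_subst]
  | app f ts ih =>
    simp only [subst_app, List.map_map, app.injEq, true_and, List.map_inj_left]
    exact ih

theorem mem_varsL_subst {y : Nat} {t : Term F} {σ : Nat → Term F}
    (h : y ∈ (t.subst σ).varsL) : ∃ x ∈ t.varsL, y ∈ (σ x).varsL := by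
  induction t using ind with
  | var n => exact ⟨n, mem_varsL_var.mpr rfl, by rwa [var_subst] at h⟩
  | app f ts ih =>
    rw [subst_app, mem_varsL_app] at h
    obtain ⟨_, hmem, hy⟩ := h
    obtain ⟨s, hs, rfl⟩ := List.mem_map.mp hmem
    obtain ⟨x, hx, hyx⟩ := ih s hs hy
    exact ⟨x, mem_varsL_app.mpr ⟨s, hs, hx⟩, hyx⟩

theorem app_subst_eq_iff {f g : F} {ss ts : List (Term F)} {σ τ : Nat → Term F} :
    (app f ss).subst σ = (app g ts).subst τ ↔
      f = g ∧ List.Forall₂ (fun a b => a.subst σ = b.subst τ) ss ts := by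
  rw [subst_app, subst_app, app.injEq, ← List.forall₂_eq_eq_eq, List.forall₂_map_left_iff,
    List.forall₂_map_right_iff]

theorem not_isVar_iff {t : Term F} : ¬ t.IsVar ↔ ∃ f ts, t = app f ts := by
  cases t <;> simp [IsVar]

theorem root_subst {t : Term F} (h : ¬ t.IsVar) (σ : Nat → Term F) :
    (t.subst σ).root = t.root := by
  obtain ⟨f, ts, rfl⟩ := not_isVar_iff.mp h
  rw [subst_app]; rfl

theorem not_isVar_subst {t : Term F} (h : ¬ t.IsVar) (σ : Nat → Term F) :
    ¬ (t.subst σ).IsVar := by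
  obtain ⟨f, ts, rfl⟩ := not_isVar_iff.mp h
  rw [subst_app]; exact id

end Term

open Term

namespace SubtermAt

theorem eq_of_nil {t s : Term F} (h : SubtermAt t [] s) : s = t := by
  cases h; rfl

theorem of_cons {f : F} {ts : List (Term F)} {i : Nat} {q : List Nat} {v : Term F}
    (h : SubtermAt (app f ts) (i :: q) v) : ∃ u, ts[i]? = some u ∧ SubtermAt u q v := by
  cases h with
  | there hget hsub => exact ⟨_, hget, hsub⟩

theorem trans {t s w : Term F} {q q' : List Nat}
    (h : SubtermAt t q s) (h' : SubtermAt s q' w) : SubtermAt t (q ++ q') w := by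
  induction h with
  | here => exact h'
  | there hget _ ih => exact there hget (ih h')

theorem subst {t s : Term F} {q : List Nat} (σ : Nat → Term F)
    (h : SubtermAt t q s) : SubtermAt (t.subst σ) q (s.subst σ) := by
  induction h with
  | here => exact here _
  | there hget _ ih =>
    rw [subst_app]
    exact there (by rw [List.getElem?_map, hget]; rfl) ih

theorem size_le {t s : Term F} {q : List Nat} (h : SubtermAt t q s) : s.size ≤ t.size := by
  induction h with
  | here => exact le_rfl
  | there hget _ ih => exact ih.trans (size_lt_of_mem (List.mem_of_getElem? hget) _).le

theorem size_lt {t s : Term F} {q : List Nat} (h : SubtermAt t q s) (hq : q ≠ []) :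
    s.size < t.size := by
  cases h with
  | here => exact absurd rfl hq
  | there hget hsub => exact hsub.size_le.trans_lt (size_lt_of_mem (List.mem_of_getElem? hget) _)

theorem exists_of_mem_varsL {x : Nat} {t : Term F} (h : x ∈ t.varsL) :
    ∃ q, SubtermAt t q (var x) := by
  induction t using Term.ind with
  | var n => exact ⟨[], by rw [mem_varsL_var.mp h]; exact here _⟩
  | app f ts ih =>
    obtain ⟨s, hs, hx⟩ := mem_varsL_app.mp h
    obtain ⟨q, hq⟩ := ih s hs hx
    obtain ⟨i, hi⟩ := List.mem_iff_getElem?.mp hs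
    exact ⟨i :: q, there hi hq⟩

theorem mem_varsL {t s : Term F} {q : List Nat} (h : SubtermAt t q s) {x : Nat}
    (hx : x ∈ s.varsL) : x ∈ t.varsL := by
  induction h with
  | here => exact hx
  | there hget _ ih => exact mem_varsL_app.mpr ⟨_, List.mem_of_getElem? hget, ih hx⟩

theorem of_subst {t v : Term F} {σ : Nat → Term F} {q : List Nat}
    (h : SubtermAt (t.subst σ) q v) :
    (∃ w, SubtermAt t q w ∧ ¬ w.IsVar ∧ v = w.subst σ) ∨
    (∃ x q₁ q₂, SubtermAt t q₁ (var x) ∧ q = q₁ ++ q₂ ∧ SubtermAt (σ x) q₂ v) := by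
  induction t using Term.ind generalizing q v with
  | var n =>
    rw [var_subst] at h
    exact Or.inr ⟨n, [], q, here _, rfl, h⟩
  | app f ts ih =>
    rw [subst_app] at h
    cases h with
    | here => exact Or.inl ⟨_, here _, id, (subst_app σ f ts).symm⟩
    | there hget hsub =>
      obtain ⟨t₀, ht₀, rfl⟩ := Option.map_eq_some_iff.mp (List.getElem?_map ▸ hget)
      rcases ih t₀ (List.mem_of_getElem? ht₀) hsub with
        ⟨w, hw, hnv, rfl⟩ | ⟨x, q₁, q₂, hx, rfl, hσ⟩
      · exact Or.inl ⟨w, there ht₀ hw, hnv, rfl⟩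
      · exact Or.inr ⟨x, _ :: q₁, q₂, there ht₀ hx, rfl, hσ⟩

theorem exists_replaceAt {t s s' v : Term F} {q p : List Nat}
    (h : SubtermAt t q s) (hr : ReplaceAt s p v s') :
    ∃ t', ReplaceAt t (q ++ p) v t' ∧ ReplaceAt t q s' t' := by
  induction h with
  | here => exact ⟨s', hr, ReplaceAt.here _ _⟩
  | there hget _ ih =>
    obtain ⟨t', h1, h2⟩ := ih hr
    exact ⟨_, ReplaceAt.there hget h1, ReplaceAt.there hget h2⟩

end SubtermAt

theorem ReplaceAt.eq_of_nil {t v w : Term F} (h : ReplaceAt t [] v w) : w = v := by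
  cases h; rfl

theorem ReplaceAt.subtermAt {t v w : Term F} {q : List Nat} (h : ReplaceAt t q v w) :
    SubtermAt w q v := by
  induction h with
  | here => exact SubtermAt.here _
  | there hget _ ih =>
    refine SubtermAt.there ?_ ih
    rw [List.getElem?_set_self (List.getElem?_eq_some_iff.mp hget).1]

theorem subst_comp_eq_of_subst_eq (N : Term F → Term F) {σ τ : Nat → Term F} {a b : Term F}
    (h : a.subst σ = b.subst τ)
    (ha : ∀ q a' y, SubtermAt a q a' → SubtermAt b q (var y) → ¬ a'.IsVar →
      N (a'.subst σ) = a'.subst (N ∘ σ))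
    (hb : ∀ q b' x, SubtermAt b q b' → SubtermAt a q (var x) → ¬ b'.IsVar →
      N (b'.subst τ) = b'.subst (N ∘ τ)) :
    a.subst (N ∘ σ) = b.subst (N ∘ τ) := by
  induction a using Term.ind generalizing b with
  | var x =>
    cases b with
    | var y => rw [var_subst, var_subst] at *; exact congrArg N h
    | app g bs =>
      rw [var_subst] at h ⊢
      rw [← hb [] _ x (SubtermAt.here _) (SubtermAt.here _) id, ← h]; rfl
  | app f as ih =>
    cases b with
    | var y =>
      rw [var_subst] at h ⊢
      rw [← ha [] _ y (SubtermAt.here _) (SubtermAt.here _) id, h]; rfl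
    | app g bs =>
      obtain ⟨rfl, hargs⟩ := app_subst_eq_iff.mp h
      rw [List.forall₂_iff_get] at hargs
      refine app_subst_eq_iff.mpr ⟨rfl, List.forall₂_iff_get.mpr ⟨hargs.1, fun i h₁ h₂ => ?_⟩⟩
      have hai : as[i]? = some (as.get ⟨i, h₁⟩) := List.getElem?_eq_getElem h₁
      have hbi : bs[i]? = some (bs.get ⟨i, h₂⟩) := List.getElem?_eq_getElem h₂
      exact ih _ (List.get_mem as ⟨i, h₁⟩) (hargs.2 i h₁ h₂)
        (fun q a' y hsa hsb => ha _ a' y (.there hai hsa) (.there hbi hsb))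
        (fun q b' x hsb hsa => hb _ b' x (.there hbi hsb) (.there hai hsa))

/-! ### Rewriting and normal forms -/

variable {R : TRS F}

def IsRedex (R : TRS F) (t : Term F) : Prop := ∃ e ∈ R, ∃ σ, t = e.1.subst σ

theorem IsRedex.oneStep {t : Term F} (h : IsRedex R t) : ∃ t', OneStep R t t' := by
  obtain ⟨e, he, σ, rfl⟩ := h
  exact ⟨_, e, he, σ, [], SubtermAt.here _, ReplaceAt.here _ _⟩

theorem OneStep.of_mem {l r : Term F} (h : (l, r) ∈ R) (σ : Nat → Term F) :
    OneStep R (l.subst σ) (r.subst σ) :=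
  ⟨(l, r), h, σ, [], SubtermAt.here _, ReplaceAt.here _ _⟩

theorem OneStep.lift {t s s' : Term F} {q : List Nat} (h : SubtermAt t q s) (hs : OneStep R s s') :
    ∃ t', OneStep R t t' ∧ ReplaceAt t q s' t' := by
  obtain ⟨e, he, σ, p, hsub, hrep⟩ := hs
  obtain ⟨t', h₁, h₂⟩ := h.exists_replaceAt hrep
  exact ⟨t', ⟨e, he, σ, q ++ p, h.trans hsub, h₁⟩, h₂⟩

theorem not_normalForm_iff {t : Term F} :
    ¬ NormalForm R t ↔ ∃ q s, SubtermAt t q s ∧ IsRedex R s := by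
  constructor
  · intro h
    obtain ⟨_, e, he, σ, q, hsub, -⟩ := not_forall_not.mp h
    exact ⟨q, _, hsub, e, he, σ, rfl⟩
  · rintro ⟨q, s, hsub, hred⟩ hnf
    obtain ⟨_, hstep⟩ := hred.oneStep
    obtain ⟨t', ht', -⟩ := hstep.lift hsub
    exact hnf t' ht'

theorem IsRedex.not_normalForm {t : Term F} (h : IsRedex R t) : ¬ NormalForm R t :=
  not_normalForm_iff.mpr ⟨[], t, SubtermAt.here _, h⟩

theorem NormalForm.subtermAt {t s : Term F} {q : List Nat} (hnf : NormalForm R t)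
    (h : SubtermAt t q s) : NormalForm R s := by
  intro s' hs
  obtain ⟨t', ht', -⟩ := hs.lift h
  exact hnf t' ht'

theorem NormalForm.subst {t : Term F} {θ : Nat → Term F}
    (hvar : ∀ x ∈ t.varsL, NormalForm R (θ x))
    (hnonvar : ∀ q w, SubtermAt t q w → ¬ w.IsVar → ¬ IsRedex R (w.subst θ)) :
    NormalForm R (t.subst θ) := by
  by_contra h
  obtain ⟨q, s, hsub, hred⟩ := not_normalForm_iff.mp h
  rcases SubtermAt.of_subst hsub with ⟨w, hw, hwnv, rfl⟩ | ⟨x, q₁, q₂, hx, -, hσx⟩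
  · exact hnonvar q w hw hwnv hred
  · exact hred.not_normalForm ((hvar x (hx.mem_varsL (mem_varsL_var.mpr rfl))).subtermAt hσx)

theorem EpsIrreducible.subst {t : Term F} {θ : Nat → Term F}
    (hvar : ∀ x ∈ t.varsL, NormalForm R (θ x))
    (hnonvar : ∀ q w, SubtermAt t q w → q ≠ [] → ¬ w.IsVar → NormalForm R (w.subst θ)) :
    EpsIrreducible R (t.subst θ) := by
  intro q s hsub hq
  rcases SubtermAt.of_subst hsub with ⟨w, hw, hwnv, rfl⟩ | ⟨x, q₁, q₂, hx, -, hσx⟩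
  · exact hnonvar q w hw hq hwnv
  · exact (hvar x (hx.mem_varsL (mem_varsL_var.mpr rfl))).subtermAt hσx

theorem EpsIrreducible.app {f : F} {ts : List (Term F)} (h : ∀ t ∈ ts, NormalForm R t) :
    EpsIrreducible R (app f ts) := by
  rintro _ s hsub hq
  cases hsub with
  | here => exact absurd rfl hq
  | there hget hsub => exact (h _ (List.mem_of_getElem? hget)).subtermAt hsub

theorem StarRW.app_middle {a b : Term F} (h : StarRW R a b) (f : F) (l r : List (Term F)) :
    StarRW R (app f (l ++ a :: r)) (app f (l ++ b :: r)) := by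
  induction h with
  | refl => exact Relation.ReflTransGen.refl
  | @tail b' c' _ hstep ih =>
    refine ih.tail ?_
    obtain ⟨e, he, σ, p, hsub, hrep⟩ := hstep
    have hget : (l ++ b' :: r)[l.length]? = some b' := by simp
    have := ReplaceAt.there (f := f) hget hrep
    rw [List.set_append_right _ _ le_rfl, Nat.sub_self, List.set_cons_zero] at this
    exact ⟨e, he, σ, l.length :: p, SubtermAt.there hget hsub, this⟩

theorem StarRW.app_map {f : F} {g g' : Term F → Term F} {ts : List (Term F)}
    (h : ∀ t ∈ ts, StarRW R (g t) (g' t)) : StarRW R (app f (ts.map g)) (app f (ts.map g')) := by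
  suffices ∀ pre, StarRW R (app f (pre ++ ts.map g)) (app f (pre ++ ts.map g')) by
    simpa using this []
  induction ts with
  | nil => exact fun _ => Relation.ReflTransGen.refl
  | cons a ts ih =>
    intro pre
    have hrest := ih (fun t ht => h t (List.mem_cons_of_mem a ht)) (pre ++ [g' a])
    simp only [List.append_assoc, List.singleton_append] at hrest
    exact (StarRW.app_middle (h a List.mem_cons_self) f pre _).trans hrest

theorem StarRW.subst {σ σ' : Nat → Term F} (h : ∀ x, StarRW R (σ x) (σ' x)) (t : Term F) :
    StarRW R (t.subst σ) (t.subst σ') := by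
  induction t using Term.ind with
  | var n => simpa only [var_subst] using h n
  | app f ts ih =>
    rw [subst_app, subst_app]
    exact StarRW.app_map ih

theorem NormalForm.eq_of_star {n m : Term F} (hn : NormalForm R n) (h : StarRW R n m) : n = m := by
  induction h using Relation.ReflTransGen.head_induction_on with
  | refl => rfl
  | head hstep _ _ => exact absurd hstep (hn _)

theorem Terminating.exists_nfof (hR : Terminating R) (s : Term F) : ∃ n, NFof R s n := by
  induction s using hR.induction with
  | _ s ih =>
    by_cases hs : NormalForm R s
    · exact ⟨s, Relation.ReflTransGen.refl, hs⟩
    · obtain ⟨t, ht⟩ := not_forall_not.mp hs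
      obtain ⟨n, hn⟩ := ih t ht
      exact ⟨n, hn.1.head ht, hn.2⟩

theorem Terminating.not_isVar_lhs (hR : Terminating R) {e : Rule F} (he : e ∈ R) :
    ¬ e.1.IsVar := by
  obtain ⟨l, r⟩ := e
  cases l with
  | app f ts => exact id
  | var y =>
    intro _
    have hstep : ∀ t, OneStep R t (r.subst fun _ => t) := fun t => by
      simpa only [var_subst] using OneStep.of_mem he fun _ => t
    exact hR.induction (C := fun _ => False) (var 0) fun t ih => ih _ (hstep t)

namespace Convergent

variable (hR : Convergent R)

noncomputable def nf (t : Term F) : Term F := (hR.2.exists_nfof t).choose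

theorem nfof_nf (t : Term F) : NFof R t (hR.nf t) := (hR.2.exists_nfof t).choose_spec

theorem nf_eq {s n : Term F} (h : NFof R s n) : hR.nf s = n := by
  obtain ⟨v, hv₁, hv₂⟩ := hR.1 s _ _ (hR.nfof_nf s).1 h.1
  rw [(hR.nfof_nf s).2.eq_of_star hv₁, h.2.eq_of_star hv₂]

theorem nf_eq_nf {s t : Term F} (h : StarRW R s t) : hR.nf s = hR.nf t :=
  hR.nf_eq ⟨h.trans (hR.nfof_nf t).1, (hR.nfof_nf t).2⟩

end Convergent

theorem FCclosed.rootStep (hfc : FCclosed R) {s n : Term F} (hs : InnermostRedex R s)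
    (hn : NFof R s n) : RootStep R s n := by
  obtain ⟨e, he, σ, q, hsub, hrep⟩ := hfc s hs n hn
  cases q with
  | nil => exact ⟨e, he, σ, hsub.eq_of_nil.symm, hrep.eq_of_nil⟩
  | cons i q =>
    exact absurd (hs.1 _ _ hsub (List.cons_ne_nil i q)) (IsRedex.not_normalForm ⟨e, he, σ, rfl⟩)

theorem Convergent.nf_app_eq_or_rootStep (hR : Convergent R) (hfc : FCclosed R) (f : F)
    (ts : List (Term F)) :
    hR.nf (app f ts) = app f (ts.map hR.nf) ∨
      RootStep R (app f (ts.map hR.nf)) (hR.nf (app f ts)) := by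
  have hstar : StarRW R (app f ts) (app f (ts.map hR.nf)) := by
    simpa using StarRW.app_map (g := id) fun t _ => (hR.nfof_nf t).1
  rw [hR.nf_eq_nf hstar]
  by_cases hnf : NormalForm R (app f (ts.map hR.nf))
  · exact Or.inl (hR.nf_eq ⟨Relation.ReflTransGen.refl, hnf⟩)
  · refine Or.inr (hfc.rootStep ⟨EpsIrreducible.app ?_, hnf⟩ (hR.nfof_nf _))
    simp only [List.mem_map]
    rintro _ ⟨t, -, rfl⟩
    exact (hR.nfof_nf t).2

/-! ### Unification -/

def UnifiesAll (θ : Nat → Term F) (L : List (Term F × Term F)) : Prop :=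
  ∀ e ∈ L, Unifies θ e.1 e.2

def IsMGUAll (σ : Nat → Term F) (L : List (Term F × Term F)) : Prop :=
  UnifiesAll σ L ∧ ∀ τ, UnifiesAll τ L → ∃ δ, ∀ x, τ x = (σ x).subst δ

def eqnVars (L : List (Term F × Term F)) : Finset Nat :=
  (L.flatMap fun e => e.1.varsL ++ e.2.varsL).toFinset

def eqnSize (L : List (Term F × Term F)) : Nat :=
  (L.map fun e => e.1.size + e.2.size).sum

theorem mem_eqnVars {y : Nat} {L : List (Term F × Term F)} :
    y ∈ eqnVars L ↔ ∃ e ∈ L, y ∈ e.1.varsL ∨ y ∈ e.2.varsL := by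
  simp [eqnVars]

theorem unifiesAll_cons {θ : Nat → Term F} {s t : Term F} {L : List (Term F × Term F)} :
    UnifiesAll θ ((s, t) :: L) ↔ Unifies θ s t ∧ UnifiesAll θ L := by
  simp [UnifiesAll]

theorem IsMGUAll.of_iff {σ : Nat → Term F} {L L' : List (Term F × Term F)}
    (h : ∀ τ, UnifiesAll τ L ↔ UnifiesAll τ L') (hσ : IsMGUAll σ L') : IsMGUAll σ L :=
  ⟨(h σ).mpr hσ.1, fun τ hτ => hσ.2 τ ((h τ).mp hτ)⟩

theorem unifiesAll_cons_comm {θ : Nat → Term F} {s t : Term F} {L : List (Term F × Term F)} :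
    UnifiesAll θ ((s, t) :: L) ↔ UnifiesAll θ ((t, s) :: L) := by
  simp only [unifiesAll_cons, Unifies, eq_comm]

theorem unifiesAll_app_cons {θ : Nat → Term F} {f : F} {ss ts : List (Term F)}
    {L : List (Term F × Term F)} (hlen : ss.length = ts.length) :
    UnifiesAll θ ((app f ss, app f ts) :: L) ↔ UnifiesAll θ (ss.zip ts ++ L) := by
  rw [unifiesAll_cons, Unifies, app_subst_eq_iff, List.forall₂_iff_zip]
  simp [UnifiesAll, Unifies, or_imp, forall_and, hlen]

theorem not_unifies_of_mem_varsL {θ : Nat → Term F} {x : Nat} {t : Term F} (hx : x ∈ t.varsL)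
    (hne : t ≠ var x) : ¬ Unifies θ (var x) t := by
  intro h
  obtain ⟨q, hq⟩ := SubtermAt.exists_of_mem_varsL hx
  have hq' : q ≠ [] := by rintro rfl; exact hne hq.eq_of_nil.symm
  have := (hq.subst θ).size_lt hq'
  rw [var_subst, ← var_subst θ x, h] at this
  exact lt_irrefl _ this

theorem subst_update_subst {τ : Nat → Term F} {x : Nat} {t : Term F} (h : Unifies τ (var x) t)
    (a : Term F) : (a.subst (Function.update var x t)).subst τ = a.subst τ := by
  rw [subst_subst]
  refine subst_congr fun z _ => ?_
  by_cases hz : z = x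
  · rw [hz, Function.update_self, ← h, var_subst]
  · rw [Function.update_of_ne hz, var_subst]

theorem unifiesAll_map_update {τ : Nat → Term F} {x : Nat} {t : Term F}
    {L : List (Term F × Term F)} :
    UnifiesAll τ ((var x, t) :: L) ↔
      Unifies τ (var x) t ∧
        UnifiesAll τ (L.map (Prod.map (subst (Function.update var x t))
          (subst (Function.update var x t)))) := by
  rw [unifiesAll_cons]
  refine and_congr_right fun h => ?_
  simp only [UnifiesAll, List.forall_mem_map, Prod.map_fst, Prod.map_snd, Unifies,
    subst_update_subst h]

theorem IsMGUAll.cons_var_of_map {x : Nat} {t : Term F} {L : List (Term F × Term F)}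
    {σ : Nat → Term F} (hx : x ∉ t.varsL)
    (hσ : IsMGUAll σ (L.map (Prod.map (subst (Function.update var x t))
      (subst (Function.update var x t))))) :
    IsMGUAll (fun z => (Function.update var x t z).subst σ) ((var x, t) :: L) := by
  have ht : t.subst (Function.update var x t) = t := by
    rw [subst_congr fun z hz => Function.update_of_ne (ne_of_mem_of_not_mem hz hx) t var,
      subst_var]
  have hunif : Unifies (fun z => (Function.update var x t z).subst σ) (var x) t := by
    rw [Unifies, var_subst, Function.update_self, ← subst_subst, ht]
  refine ⟨unifiesAll_cons.mpr ⟨hunif, fun e he => ?_⟩, fun τ hτ => ?_⟩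
  · rw [Unifies, ← subst_subst, ← subst_subst]
    exact hσ.1 _ (List.mem_map_of_mem he)
  · obtain ⟨hτx, hτL⟩ := unifiesAll_map_update.mp hτ
    obtain ⟨δ, hδ⟩ := hσ.2 τ hτL
    refine ⟨δ, fun z => ?_⟩
    have hz := subst_update_subst hτx (var z)
    rw [var_subst, var_subst] at hz
    rw [subst_subst, ← hz]
    exact subst_congr fun w _ => hδ w

theorem Prod.lex_lt_of_le_of_lt {α β : Type*} [PartialOrder α] [LT β] {a a' : α} {b b' : β}
    (ha : a ≤ a') (hb : b < b') :
    Prod.Lex (· < ·) (· < ·) (a, b) (a', b') := by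
  rcases ha.lt_or_eq with ha | rfl
  exacts [Prod.Lex.left _ _ ha, Prod.Lex.right _ hb]

theorem eqnVars_cons_comm (s t : Term F) (L : List (Term F × Term F)) :
    eqnVars ((s, t) :: L) = eqnVars ((t, s) :: L) := by
  ext; simp only [mem_eqnVars, List.mem_cons, exists_eq_or_imp, Or.comm (a := _ ∈ s.varsL)]

theorem eqnVars_subset_cons (e : Term F × Term F) (L : List (Term F × Term F)) :
    eqnVars L ⊆ eqnVars (e :: L) := by
  intro y; simp only [mem_eqnVars, List.mem_cons, exists_eq_or_imp]; exact Or.inr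

theorem eqnSize_cons (e : Term F × Term F) (L : List (Term F × Term F)) :
    eqnSize (e :: L) = e.1.size + e.2.size + eqnSize L := by
  simp [eqnSize]

theorem card_eqnVars_map_update_lt {x : Nat} {t : Term F} (hx : x ∉ t.varsL)
    (L : List (Term F × Term F)) :
    (eqnVars (L.map (Prod.map (subst (Function.update var x t))
      (subst (Function.update var x t))))).card < (eqnVars ((var x, t) :: L)).card := by
  have hsubst : ∀ a : Term F, (∀ z ∈ a.varsL, z ∈ eqnVars ((var x, t) :: L)) →
      ∀ y ∈ (a.subst (Function.update var x t)).varsL, y ∈ eqnVars ((var x, t) :: L) ∧ y ≠ x := by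
    intro a ha y hy
    obtain ⟨z, hz, hyz⟩ := mem_varsL_subst hy
    by_cases hzx : z = x
    · rw [hzx, Function.update_self] at hyz
      exact ⟨mem_eqnVars.mpr ⟨_, List.mem_cons_self, Or.inr hyz⟩, ne_of_mem_of_not_mem hyz hx⟩
    · rw [Function.update_of_ne hzx, mem_varsL_var] at hyz
      exact hyz ▸ ⟨ha z hz, hzx⟩
  have hmem : ∀ y ∈ eqnVars (L.map (Prod.map (subst (Function.update var x t))
      (subst (Function.update var x t)))), y ∈ eqnVars ((var x, t) :: L) ∧ y ≠ x := by
    intro y hy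
    obtain ⟨_, hmap, hy⟩ := mem_eqnVars.mp hy
    obtain ⟨e, he, rfl⟩ := List.mem_map.mp hmap
    have hvars : ∀ z, z ∈ e.1.varsL ∨ z ∈ e.2.varsL → z ∈ eqnVars ((var x, t) :: L) :=
      fun z hz => mem_eqnVars.mpr ⟨e, List.mem_cons_of_mem _ he, hz⟩
    rcases hy with hy | hy
    exacts [hsubst _ (fun z hz => hvars z (Or.inl hz)) y hy,
      hsubst _ (fun z hz => hvars z (Or.inr hz)) y hy]
  refine Finset.card_lt_card ((Finset.ssubset_iff_of_subset fun y hy => (hmem y hy).1).mpr ?_)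
  exact ⟨x, mem_eqnVars.mpr ⟨_, List.mem_cons_self, Or.inl (mem_varsL_var.mpr rfl)⟩,
    fun h => (hmem x h).2 rfl⟩

theorem eqnVars_zip_append_subset (f : F) (ss ts : List (Term F)) (L : List (Term F × Term F)) :
    eqnVars (ss.zip ts ++ L) ⊆ eqnVars ((app f ss, app f ts) :: L) := by
  intro y hy
  obtain ⟨e, he, hy⟩ := mem_eqnVars.mp hy
  rcases List.mem_append.mp he with hz | hL
  · have hmem := List.of_mem_zip hz
    refine mem_eqnVars.mpr ⟨_, List.mem_cons_self, ?_⟩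
    rcases hy with hy | hy
    exacts [Or.inl (mem_varsL_app.mpr ⟨_, hmem.1, hy⟩), Or.inr (mem_varsL_app.mpr ⟨_, hmem.2, hy⟩)]
  · exact mem_eqnVars.mpr ⟨e, List.mem_cons_of_mem _ hL, hy⟩

theorem eqnSize_zip_append_lt (f : F) {ss ts : List (Term F)} (hlen : ss.length = ts.length)
    (L : List (Term F × Term F)) :
    eqnSize (ss.zip ts ++ L) < eqnSize ((app f ss, app f ts) :: L) := by
  have hzip : eqnSize (ss.zip ts) = (ss.map size).sum + (ts.map size).sum := by
    rw [eqnSize, List.sum_map_add, show (fun e : Term F × Term F => e.1.size) = size ∘ Prod.fst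
      from rfl, show (fun e : Term F × Term F => e.2.size) = size ∘ Prod.snd from rfl,
      ← List.map_map, ← List.map_map, List.map_fst_zip hlen.le, List.map_snd_zip hlen.ge]
  have happ : eqnSize (ss.zip ts ++ L) = eqnSize (ss.zip ts) + eqnSize L := by
    simp [eqnSize]
  rw [eqnSize_cons, size_app, size_app, happ, hzip]
  omega

theorem exists_isMGUAll (L : List (Term F × Term F)) (θ : Nat → Term F) (h : UnifiesAll θ L) :
    ∃ σ, IsMGUAll σ L := by
  match L, h with
  | [], _ =>
    exact ⟨var, fun _ he => absurd he List.not_mem_nil,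
      fun τ _ => ⟨τ, fun x => (var_subst τ x).symm⟩⟩
  | (var x, t) :: L, h =>
    by_cases hx : x ∈ t.varsL
    · by_cases ht : t = var x
      · subst ht
        obtain ⟨σ, hσ⟩ := exists_isMGUAll L θ (unifiesAll_cons.mp h).2
        exact ⟨σ, hσ.of_iff fun τ => by simp [unifiesAll_cons, Unifies]⟩
      · exact absurd (unifiesAll_cons.mp h).1 (not_unifies_of_mem_varsL hx ht)
    · obtain ⟨σ, hσ⟩ := exists_isMGUAll _ θ (unifiesAll_map_update.mp h).2
      exact ⟨_, hσ.cons_var_of_map hx⟩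
  | (app f ss, var y) :: L, h =>
    rw [unifiesAll_cons_comm] at h
    by_cases hy : y ∈ (app f ss).varsL
    · exact absurd (unifiesAll_cons.mp h).1 (not_unifies_of_mem_varsL hy (by simp))
    · obtain ⟨σ, hσ⟩ := exists_isMGUAll _ θ (unifiesAll_map_update.mp h).2
      exact ⟨_, (hσ.cons_var_of_map hy).of_iff fun τ => unifiesAll_cons_comm⟩
  | (app f ss, app g ts) :: L, h =>
    obtain ⟨rfl, hargs⟩ := app_subst_eq_iff.mp (unifiesAll_cons.mp h).1
    have hlen := hargs.length_eq
    obtain ⟨σ, hσ⟩ := exists_isMGUAll (ss.zip ts ++ L) θ ((unifiesAll_app_cons hlen).mp h)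
    exact ⟨σ, hσ.of_iff fun τ => unifiesAll_app_cons hlen⟩
termination_by ((eqnVars L).card, eqnSize L)
decreasing_by
  · exact Prod.lex_lt_of_le_of_lt (Finset.card_le_card (eqnVars_subset_cons _ L))
      (by rw [eqnSize_cons]; have := size_pos t; dsimp only; omega)
  · exact Prod.Lex.left _ _ (card_eqnVars_map_update_lt hx L)
  · exact Prod.Lex.left _ _ (eqnVars_cons_comm (var y) _ L ▸ card_eqnVars_map_update_lt hy L)
  · subst g
    exact Prod.lex_lt_of_le_of_lt (Finset.card_le_card (eqnVars_zip_append_subset f ss ts L))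
      (eqnSize_zip_append_lt f hlen L)

theorem exists_isMGU {s t : Term F} {θ : Nat → Term F} (h : Unifies θ s t) :
    ∃ σ, IsMGU σ s t := by
  obtain ⟨σ, hσ₁, hσ₂⟩ := exists_isMGUAll [(s, t)] θ (by simpa [UnifiesAll] using h)
  exact ⟨σ, by simpa [UnifiesAll] using hσ₁, fun τ hτ => hσ₂ τ (by simpa [UnifiesAll] using hτ)⟩

theorem exists_isRenaming_isMGU {s t : Term F} {δ δ' : Nat → Term F}
    (h : s.subst δ = t.subst δ') : ∃ ρ σ, IsRenaming ρ ∧ IsMGU σ s (t.subst ρ) := by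
  obtain ⟨K, hK⟩ : ∃ K, ∀ x ∈ s.varsL, x < K :=
    ⟨s.varsL.sum + 1, fun x hx => Nat.lt_succ_of_le (List.le_sum_of_mem hx)⟩
  have hunif : Unifies (fun z => if z < K then δ z else δ' (z - K)) s
      (t.subst fun n => var (n + K)) := by
    rw [Unifies, subst_congr fun x hx => if_pos (hK x hx), subst_subst, h]
    refine subst_congr fun y _ => ?_
    rw [var_subst, if_neg (by omega), Nat.add_sub_cancel]
  obtain ⟨σ, hσ⟩ := exists_isMGU hunif
  exact ⟨_, σ, ⟨(· + K), add_left_injective K, fun _ => rfl⟩, hσ⟩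

/-! ### Quasi-determinism and root steps -/

namespace QuasiDet

variable {E : TRS F}

theorem mono (hq : QuasiDet E) {E' : TRS F} (hE : E' ⊆ E) : QuasiDet E' :=
  ⟨fun e he => hq.1 e (hE he), fun e he => hq.2.1 e (hE he),
    fun e₁ he₁ e₂ he₂ => hq.2.2 e₁ (hE he₁) e₂ (hE he₂)⟩

theorem root_subst_fst (hq : QuasiDet E) {e : Rule F} (he : e ∈ E) (δ : Nat → Term F) :
    (e.1.subst δ).root = e.1.root :=
  root_subst (hq.1 e he).1 δ

theorem root_subst_snd (hq : QuasiDet E) {e : Rule F} (he : e ∈ E) (δ : Nat → Term F) :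
    (e.2.subst δ).root = e.2.root :=
  root_subst (hq.1 e he).2 δ

theorem eq_of_roots_eq (hq : QuasiDet E) {e₁ e₂ : Rule F} (he₁ : e₁ ∈ E) (he₂ : e₂ ∈ E)
    (h₁ : e₁.1.root = e₂.1.root) (h₂ : e₁.2.root = e₂.2.root) : e₁ = e₂ :=
  by_contra fun hne => hq.2.2 e₁ he₁ e₂ he₂ hne (Or.inl ⟨h₁, h₂⟩)

theorem false_of_roots_swap (hq : QuasiDet E) {e₁ e₂ : Rule F} (he₁ : e₁ ∈ E) (he₂ : e₂ ∈ E)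
    (h₁ : e₁.1.root = e₂.2.root) (h₂ : e₁.2.root = e₂.1.root) : False := by
  by_cases hne : e₁ = e₂
  · subst hne; exact hq.2.1 e₁ he₁ h₁
  · exact hq.2.2 e₁ he₁ e₂ he₂ hne (Or.inr ⟨h₁, h₂⟩)

theorem exists_roots_of_rootStep (hq : QuasiDet E) {s t : Term F} (h : RootStep E s t) :
    ∃ e ∈ E, e.1.root = s.root ∧ e.2.root = t.root := by
  obtain ⟨e, he, δ, rfl, rfl⟩ := h
  exact ⟨e, he, (hq.root_subst_fst he δ).symm, (hq.root_subst_snd he δ).symm⟩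

theorem root_ne_of_rootStep (hq : QuasiDet E) {s t : Term F} (h : RootStep E s t) :
    s.root ≠ t.root := by
  obtain ⟨e, he, hs, ht⟩ := hq.exists_roots_of_rootStep h
  rw [← hs, ← ht]
  exact hq.2.1 e he

end QuasiDet

theorem exists_mem_RHSset_of_rootStep {R : TRS F} (hq : QuasiDet R) {s t n : Term F}
    (hs : RootStep R s n) (ht : RootStep R t n) (hroot : s.root ≠ t.root) :
    ∃ e ∈ RHSset R, e.1.root = s.root ∧ e.2.root = t.root := by
  obtain ⟨e₁, he₁, δ₁, rfl, hn₁⟩ := hs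
  obtain ⟨e₂, he₂, δ₂, rfl, hn₂⟩ := ht
  obtain ⟨ρ, σ, hρ, hσ⟩ := exists_isRenaming_isMGU (hn₁.symm.trans hn₂)
  have hroots : (e₁.1.subst σ).root = (e₁.1.subst δ₁).root ∧
      ((e₂.1.subst ρ).subst σ).root = (e₂.1.subst δ₂).root := by
    rw [hq.root_subst_fst he₁, hq.root_subst_fst he₁, hq.root_subst_fst he₂,
      root_subst (not_isVar_subst (hq.1 e₂ he₂).1 ρ), root_subst (hq.1 e₂ he₂).1]
    exact ⟨rfl, rfl⟩
  refine ⟨_, Or.inr ⟨_, _, _, _, ρ, σ, he₁, he₂, hρ, hσ, fun h => hroot ?_, rfl⟩, hroots⟩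
  rw [← hroots.1, ← hroots.2, h]

/-! ### Minimal overlap instances -/

def StepOrSubterm (R : TRS F) (a b : Term F) : Prop :=
  OneStep R b a ∨ ∃ q, q ≠ [] ∧ SubtermAt b q a

def Below (R : TRS F) : Term F → Term F → Prop := Relation.TransGen (StepOrSubterm R)

theorem acc_stepOrSubterm_of_subtermAt (hR : Terminating R) (t : Term F) :
    ∀ q s, SubtermAt t q s → Acc (StepOrSubterm R) s := by
  induction t using hR.induction with
  | _ t ih =>
    intro q s hs
    induction s using (measure Term.size).wf.induction generalizing q with
    | _ s ihs =>
      refine ⟨_, ?_⟩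
      rintro y (hy | ⟨q', hq', hy⟩)
      · obtain ⟨t', ht', hrep⟩ := hy.lift hs
        exact ih t' ht' q y hrep.subtermAt
      · exact ihs y (hy.size_lt hq') (q ++ q') (hs.trans hy)

theorem wellFounded_below (hR : Terminating R) : WellFounded (Below R) :=
  WellFounded.transGen ⟨fun t => acc_stepOrSubterm_of_subtermAt hR t [] t (SubtermAt.here t)⟩

theorem StarRW.reflTransGen_stepOrSubterm {a b : Term F} (h : StarRW R a b) :
    Relation.ReflTransGen (StepOrSubterm R) b a := by
  induction h with
  | refl => exact .refl
  | tail _ hstep ih => exact ih.head (Or.inl hstep)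

theorem SubtermAt.reflTransGen_stepOrSubterm {a b : Term F} {q : List Nat} (h : SubtermAt b q a) :
    Relation.ReflTransGen (StepOrSubterm R) a b := by
  rcases eq_or_ne q [] with rfl | hq
  · rw [h.eq_of_nil]
  · exact Relation.ReflTransGen.single (Or.inr ⟨q, hq, h⟩)

theorem SubtermAt.below_of_ne_nil {a b : Term F} {q : List Nat} (h : SubtermAt b q a)
    (hq : q ≠ []) : Below R a b :=
  Relation.TransGen.single (Or.inr ⟨q, hq, h⟩)

theorem StarRW.below_of_ne {a b : Term F} (h : StarRW R a b) (hne : b ≠ a) : Below R b a :=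
  (Relation.reflTransGen_iff_eq_or_transGen.mp h.reflTransGen_stepOrSubterm).resolve_left hne.symm

def IsInnerLhsSubterm (R : TRS F) (u : Term F) : Prop :=
  ∃ e ∈ R, ∃ p, p ≠ [] ∧ SubtermAt e.1 p u ∧ ¬ u.IsVar

theorem IsInnerLhsSubterm.subtermAt {u w : Term F} {q : List Nat} (hu : IsInnerLhsSubterm R u)
    (h : SubtermAt u q w) (hw : ¬ w.IsVar) : IsInnerLhsSubterm R w := by
  obtain ⟨e, he, p, hp, hsub, -⟩ := hu
  exact ⟨e, he, p ++ q, by simp [hp], hsub.trans h, hw⟩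

theorem IsInnerLhsSubterm.not_isVar {u : Term F} (hu : IsInnerLhsSubterm R u) : ¬ u.IsVar := by
  obtain ⟨-, -, -, -, -, h⟩ := hu; exact h

def IsOverlapInstance (R : TRS F) (c : Term F) : Prop :=
  ∃ u σ, IsInnerLhsSubterm R u ∧ c = u.subst σ ∧ IsRedex R c

def NoOverlapBelow (R : TRS F) (c : Term F) : Prop :=
  ∀ c', Below R c' c → ¬ IsOverlapInstance R c'

theorem nfof_subst_nf_of_below (hR : Convergent R) {c : Term F} (hmin : NoOverlapBelow R c)
    {w : Term F} (hw : IsInnerLhsSubterm R w) {θ : Nat → Term F}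
    (hbelow : Below R (w.subst θ) c) : NFof R (w.subst θ) (w.subst (hR.nf ∘ θ)) := by
  have hstar : StarRW R (w.subst θ) (w.subst (hR.nf ∘ θ)) :=
    StarRW.subst (fun x => (hR.nfof_nf (θ x)).1) w
  refine ⟨hstar, NormalForm.subst (fun x _ => (hR.nfof_nf (θ x)).2) fun q w' hsub hnv hred => ?_⟩
  refine hmin _ ?_ ⟨w', _, hw.subtermAt hsub hnv, rfl, hred⟩
  exact Relation.TransGen.trans_right
    ((hsub.subst _).reflTransGen_stepOrSubterm.trans hstar.reflTransGen_stepOrSubterm) hbelow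

theorem subst_nf_eq_of_noOverlapBelow (hR : Convergent R) {c : Term F}
    (hmin : NoOverlapBelow R c) {u : Term F} {σ : Nat → Term F} (hu : IsInnerLhsSubterm R u)
    (hc : c = u.subst σ) (hred : IsRedex R c) : u.subst (hR.nf ∘ σ) = c := by
  obtain ⟨e', he', τ, hτ⟩ := hred
  have hcomm : u.subst (hR.nf ∘ σ) = e'.1.subst (hR.nf ∘ τ) := by
    refine subst_comp_eq_of_subst_eq hR.nf (hc.symm.trans hτ) (fun q a' y hsa hsb hnv => ?_)
      (fun q b' x hsb hsa hnv => ?_)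
    · have hq : q ≠ [] := by
        rintro rfl; exact hR.2.not_isVar_lhs he' (by rw [← hsb.eq_of_nil]; trivial)
      exact hR.nf_eq (nfof_subst_nf_of_below hR hmin (hu.subtermAt hsa hnv)
        (hc ▸ (hsa.subst σ).below_of_ne_nil hq))
    · have hq : q ≠ [] := by
        rintro rfl; exact hu.not_isVar (by rw [← hsa.eq_of_nil]; trivial)
      exact hR.nf_eq (nfof_subst_nf_of_below hR hmin ⟨e', he', q, hq, hsb, hnv⟩
        (hτ ▸ (hsb.subst τ).below_of_ne_nil hq))
  by_contra hne
  refine hmin _ (StarRW.below_of_ne ?_ hne) ⟨u, _, hu, rfl, e', he', _, hcomm⟩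
  exact hc ▸ StarRW.subst (fun x => (hR.nfof_nf (σ x)).1) u

theorem innermostRedex_of_noOverlapBelow (hR : Convergent R) {c : Term F}
    (hmin : NoOverlapBelow R c) {u : Term F} {σ : Nat → Term F}
    (hu : IsInnerLhsSubterm R u) (hc : c = u.subst σ) (hred : IsRedex R c) :
    InnermostRedex R c := by
  refine ⟨?_, hred.not_normalForm⟩
  rw [← subst_nf_eq_of_noOverlapBelow hR hmin hu hc hred]
  refine EpsIrreducible.subst (fun x _ => (hR.nfof_nf (σ x)).2) fun q w hsub hq hnv => ?_
  exact (nfof_subst_nf_of_below hR hmin (hu.subtermAt hsub hnv)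
    (hc ▸ (hsub.subst σ).below_of_ne_nil hq)).2

theorem nf_subst_ne_subst (hR : Convergent R) (hfc : FCclosed R) (hq : QuasiDet R) {u : Term F}
    (hu : ¬ u.IsVar) {θ : Nat → Term F} (hroot : (hR.nf (u.subst θ)).root ≠ u.root)
    {v : Term F} {p : List Nat} (hv : SubtermAt v p u) (δ : Nat → Term F) :
    hR.nf (v.subst θ) ≠ v.subst δ := by
  induction hv with
  | here => exact fun h => hroot (by rw [h, root_subst hu])
  | @there f ts i v' p _ hget _ ih =>
    intro h
    rw [subst_app, subst_app] at h
    rcases hR.nf_app_eq_or_rootStep hfc f (ts.map (subst θ)) with heq | hstep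
    · rw [heq, List.map_map, app.injEq, List.map_inj_left] at h
      exact ih hu hroot (h.2 v' (List.mem_of_getElem? hget))
    · exact hq.root_ne_of_rootStep hstep (by rw [h]; rfl)

theorem root_nf_subst (hR : Convergent R) (hfc : FCclosed R) (hq : QuasiDet (RHSset R))
    {u : Term F} (hu : IsInnerLhsSubterm R u) (θ : Nat → Term F) :
    (hR.nf (u.subst θ)).root = u.root := by
  obtain ⟨e, he, _ | ⟨i, p⟩, hp, hsub, hnv⟩ := hu
  · exact absurd rfl hp
  have hqR := hq.mono Set.subset_union_left
  by_contra hroot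
  obtain ⟨f, ls, hl⟩ := not_isVar_iff.mp (hqR.1 e he).1
  obtain ⟨g, rs, hr⟩ := not_isVar_iff.mp (hqR.1 e he).2
  rw [hl] at hsub
  obtain ⟨v, hv, hvu⟩ := hsub.of_cons
  have hpeak : hR.nf (app f (ls.map (subst θ))) = hR.nf (app g (rs.map (subst θ))) := by
    rw [← subst_app, ← subst_app, ← hl, ← hr]
    exact hR.nf_eq_nf (.single (OneStep.of_mem he θ))
  have hswap : ∀ e' ∈ RHSset R, e'.1.root = some g → e'.2.root = some f → False :=
    fun e' he' h₁ h₂ => hq.false_of_roots_swap he' (Or.inl he) (by rw [h₁, hr]; rfl)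
      (by rw [h₂, hl]; rfl)
  rcases hR.nf_app_eq_or_rootStep hfc f (ls.map (subst θ)) with hs | hs <;>
    rcases hR.nf_app_eq_or_rootStep hfc g (rs.map (subst θ)) with ha | ha
  · have hfg : f = g := (app.inj (hs.symm.trans (hpeak.trans ha))).1
    exact hqR.2.1 e he (by rw [hl, hr, hfg]; rfl)
  · obtain ⟨e', he', h₁, h₂⟩ := hqR.exists_roots_of_rootStep ha
    exact hswap e' (Or.inl he') h₁ (by rw [h₂, ← hpeak, hs]; rfl)
  · obtain ⟨e', he', δ, hsδ, hNδ⟩ := hs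
    have hee' : e' = e := hqR.eq_of_roots_eq he' he
      (by rw [← hqR.root_subst_fst he' δ, ← hsδ, hl]; rfl)
      (by rw [← hqR.root_subst_snd he' δ, ← hNδ, hpeak, ha, hr]; rfl)
    rw [hee', hl, subst_app, List.map_map, app.injEq, List.map_inj_left] at hsδ
    exact nf_subst_ne_subst hR hfc hqR hnv hroot hvu δ (hsδ.2 v (List.mem_of_getElem? hv))
  · obtain ⟨e', he', h₁, h₂⟩ := exists_mem_RHSset_of_rootStep hqR ha (hpeak ▸ hs)
      (fun h => hqR.2.1 e he (by rw [hl, hr]; exact h.symm))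
    exact hswap e' he' h₁ h₂

theorem not_isOverlapInstance (hR : Convergent R) (hfc : FCclosed R) (hq : QuasiDet (RHSset R))
    (c : Term F) : ¬ IsOverlapInstance R c := by
  induction c using (wellFounded_below hR.2).induction with
  | _ c hmin =>
    rintro ⟨u, σ, hu, hc, hred⟩
    have hinner := innermostRedex_of_noOverlapBelow hR hmin hu hc hred
    apply (hq.mono Set.subset_union_left).root_ne_of_rootStep
      (hfc.rootStep hinner (hR.nfof_nf c))
    rw [hc, root_nf_subst hR hfc hq hu σ, root_subst hu.not_isVar]

/-- LM-systems have no non-overlay superpositions: no proper non-variable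
subterm of a lhs is unifiable with a lhs (common-instance formulation, covering
renamed-apart copies); hence NOSUP(R) = ∅. -/
theorem no_nonoverlay_superpositions {F : Type} (R : TRS F) (hlm : LMSystem R)
    (e1 e2 : Rule F) (h1 : e1 ∈ R) (h2 : e2 ∈ R)
    (p : List Nat) (u : Term F)
    (hp : p ≠ []) (hsub : SubtermAt e1.1 p u) (hnv : ¬ u.IsVar) :
    ¬ ∃ (σ τ : Nat → Term F), u.subst σ = e2.1.subst τ := by
  rintro ⟨σ, τ, h⟩
  exact not_isOverlapInstance hlm.convergent hlm.forwardClosed hlm.quasiDet _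
    ⟨u, σ, ⟨e1, h1, p, hp, hsub, hnv⟩, rfl, e2, h2, τ, h⟩
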